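/- arXiv:2302.02229 — 2 statements merged into one kernel-verified Lean document; each statement's English description precedes it below -/
import Mathlib

section
/- For positive integers m < n: ∑_{i=1}^m (n−i)!/((m−i)!·i²) = (n!/m!)·( ∑_{i=1}^m H_{i+n-m-1}/i + (1/2)·(H²_n − H²_{n−m}) − (1/2)·(H_n² − H_{n−m}²) + H_{n−m−1}·(H_n − H_{n−m} − H_m) ), where H_k = ∑ 1/j and H²_k = ∑ 1/j². -/
/-!
Write `S_k(n) = ∑_{i=1}^m (n-i)! / ((m-i)! i^k)`. Since `(n+1-i)! = ((n+1) - i) (n-i)!`, these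
sums satisfy `S_{k+1}(n+1) = (n+1) S_{k+1}(n) - S_k(n)`, while `S_k(m) = ∑_{i=1}^m 1/i^k` and the
hockey-stick sum is `S_0(n) = (n!/m!) m/(n-m+1)`. Induction on `n` then gives
`S_1(n) = (n!/m!) (H_n - H_{n-m})`, and finally the formula for `S_2`: the bracket obeys the matching
recurrence because `∑_{i=1}^m (H_{i+c} - H_{i+c-1})/i = ∑_{i=1}^m 1/(i(i+c))` telescopes to
`(H_m + H_c - H_{m+c})/c`.
-/

open Finset

noncomputable def H (n : ℕ) : ℝ := ∑ k ∈ Finset.range n, 1 / ((k : ℝ) + 1)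
noncomputable def H2 (n : ℕ) : ℝ := ∑ k ∈ Finset.range n, 1 / ((k : ℝ) + 1) ^ 2

open scoped Nat

@[simp] lemma H_zero : H 0 = 0 := by simp [H]

@[simp] lemma H2_zero : H2 0 = 0 := by simp [H2]

lemma H_succ (n : ℕ) : H (n + 1) = H n + 1 / (n + 1) := by
  simp [H, sum_range_succ]

lemma H2_succ (n : ℕ) : H2 (n + 1) = H2 n + 1 / (n + 1) ^ 2 := by
  simp [H2, sum_range_succ]

lemma H_eq_sum_Icc (n : ℕ) : H n = ∑ i ∈ Icc 1 n, 1 / (i : ℝ) := by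
  induction n with
  | zero => simp
  | succ n ih => rw [H_succ, sum_Icc_succ_top (by omega), ih]; push_cast; rfl

lemma H2_eq_sum_Icc (n : ℕ) : H2 n = ∑ i ∈ Icc 1 n, 1 / (i : ℝ) ^ 2 := by
  induction n with
  | zero => simp
  | succ n ih => rw [H2_succ, sum_Icc_succ_top (by omega), ih]; push_cast; rfl

lemma sum_Icc_H_div (m : ℕ) : ∑ i ∈ Icc 1 m, H i / i = (H m ^ 2 + H2 m) / 2 := by
  induction m with
  | zero => simp
  | succ m ih =>
    rw [sum_Icc_succ_top (by omega), ih, H_succ, H2_succ]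
    push_cast
    field_simp
    ring

lemma sum_Icc_one_div_mul_add (m : ℕ) {c : ℕ} (hc : c ≠ 0) :
    ∑ i ∈ Icc 1 m, 1 / ((i : ℝ) * (i + c)) = (H m + H c - H (m + c)) / c := by
  induction m with
  | zero => simp
  | succ m ih =>
    rw [sum_Icc_succ_top (by omega), ih, show m + 1 + c = m + c + 1 by ring, H_succ, H_succ]
    push_cast
    field_simp
    ring

noncomputable def factorialSum (k m n : ℕ) : ℝ :=
  ∑ i ∈ Icc 1 m, ((n - i)! : ℝ) / ((m - i)! * (i : ℝ) ^ k)

lemma factorialSum_self (k m : ℕ) : factorialSum k m m = ∑ i ∈ Icc 1 m, 1 / (i : ℝ) ^ k := by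
  refine sum_congr rfl fun i _ => ?_
  have : ((m - i)! : ℝ) ≠ 0 := by positivity
  field_simp

lemma factorialSum_succ (k : ℕ) {m n : ℕ} (hmn : m ≤ n) :
    factorialSum (k + 1) m (n + 1) = (n + 1) * factorialSum (k + 1) m n - factorialSum k m n := by
  simp only [factorialSum, mul_sum, ← sum_sub_distrib]
  refine sum_congr rfl fun i hi => ?_
  obtain ⟨hi1, him⟩ := mem_Icc.mp hi
  rw [Nat.succ_sub (by omega), Nat.factorial_succ, Nat.cast_mul, Nat.cast_succ, Nat.cast_sub (by omega)]
  have : (i : ℝ) ≠ 0 := by positivity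
  field_simp
  ring

lemma factorialSum_zero (m d : ℕ) : factorialSum 0 m (m + d) = (m + d)! / m ! * (m / (d + 1)) := by
  induction m with
  | zero => simp [factorialSum]
  | succ m ih =>
    have peel : factorialSum 0 (m + 1) (m + 1 + d) = (m + d)! / m ! + factorialSum 0 m (m + d) := by
      rw [factorialSum, ← insert_Icc_add_one_left_eq_Icc (by omega), sum_insert (by simp),
        ← map_add_right_Icc, sum_map]
      congr 1
      · simp [show m + 1 + d - 1 = m + d by omega]
      · refine sum_congr rfl fun i _ => ?_
        simp [show m + 1 + d - (i + 1) = m + d - i by omega]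
    rw [peel, ih, show m + 1 + d = m + d + 1 by ring, Nat.factorial_succ, Nat.factorial_succ]
    push_cast
    field_simp
    ring

lemma factorialSum_one (m d : ℕ) :
    factorialSum 1 m (m + d) = (m + d)! / m ! * (H (m + d) - H d) := by
  induction d with
  | zero => simp [factorialSum_self, H_eq_sum_Icc, Nat.factorial_ne_zero]
  | succ d ih =>
    rw [← add_assoc, factorialSum_succ 0 (by omega), ih, factorialSum_zero, Nat.factorial_succ,
      H_succ, H_succ]
    push_cast
    field_simp
    ring

/-- The bracket on the right of the theorem at `n = m + d + 1`, with its truncated subtractions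
resolved. -/
noncomputable def closedForm (m d : ℕ) : ℝ :=
  ∑ i ∈ Icc 1 m, H (i + d) / i + 1 / 2 * (H2 (m + d + 1) - H2 (d + 1))
    - 1 / 2 * (H (m + d + 1) ^ 2 - H (d + 1) ^ 2) + H d * (H (m + d + 1) - H (d + 1) - H m)

lemma closedForm_zero (m : ℕ) : closedForm m 0 = H2 m - H m / (m + 1) := by
  simp only [closedForm, add_zero, sum_Icc_H_div, H_succ, H2_succ, H_zero, H2_zero]
  push_cast
  field_simp
  ring

lemma closedForm_succ (m d : ℕ) :
    closedForm m (d + 1) = closedForm m d - (H (m + d + 1) - H (d + 1)) / (m + d + 2) := by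
  have telescope : ∑ i ∈ Icc 1 m, H (i + (d + 1)) / i
      = ∑ i ∈ Icc 1 m, H (i + d) / i + (H m + H (d + 1) - H (m + (d + 1))) / (d + 1 : ℕ) := by
    rw [← sum_Icc_one_div_mul_add m d.succ_ne_zero, ← sum_add_distrib]
    refine sum_congr rfl fun i hi => ?_
    have : (i : ℝ) ≠ 0 := Nat.cast_ne_zero.mpr (by have := (mem_Icc.mp hi).1; omega)
    rw [← add_assoc, H_succ]
    push_cast
    field_simp
    ring
  rw [closedForm, closedForm, telescope, show m + (d + 1) = m + d + 1 by ring]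
  simp only [H_succ, H2_succ]
  push_cast
  field_simp
  ring

lemma factorialSum_two (m d : ℕ) :
    factorialSum 2 m (m + d + 1) = (m + d + 1)! / m ! * closedForm m d := by
  induction d with
  | zero =>
    rw [add_zero, factorialSum_succ 1 le_rfl, factorialSum_self, factorialSum_self]
    simp only [pow_one, ← H_eq_sum_Icc, ← H2_eq_sum_Icc]
    rw [closedForm_zero, Nat.factorial_succ]
    push_cast
    field_simp
  | succ d ih =>
    have hone := factorialSum_one m (d + 1)
    rw [← add_assoc] at hone
    rw [← add_assoc, factorialSum_succ 1 (by omega), ih, hone, closedForm_succ,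
      Nat.factorial_succ (m + d + 1)]
    push_cast
    field_simp
    ring

theorem stmt9_general (m n : ℕ) (hmn : m < n) :
    ∑ i ∈ Finset.Icc 1 m, ((Nat.factorial (n - i)) : ℝ) / (((Nat.factorial (m - i)) : ℝ) * (i : ℝ) ^ 2)
      = (((Nat.factorial n) : ℝ) / ((Nat.factorial m) : ℝ))
        * ((∑ i ∈ Finset.Icc 1 m, H (i + (n - m) - 1) / (i : ℝ))
            + (1 / 2) * (H2 n - H2 (n - m))
            - (1 / 2) * ((H n) ^ 2 - (H (n - m)) ^ 2)
            + H (n - m - 1) * (H n - H (n - m) - H m)) := by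
  obtain ⟨d, rfl⟩ : ∃ d, n = m + d + 1 := ⟨n - m - 1, by omega⟩
  have hsub : m + d + 1 - m = d + 1 := by omega
  simp only [hsub, Nat.add_sub_cancel, ← add_assoc]
  exact factorialSum_two m d

theorem stmt9 (m n : ℕ) (hm : 0 < m) (hmn : m < n) :
    ∑ i ∈ Finset.Icc 1 m, ((Nat.factorial (n - i)) : ℝ) / (((Nat.factorial (m - i)) : ℝ) * (i : ℝ) ^ 2)
      = (((Nat.factorial n) : ℝ) / ((Nat.factorial m) : ℝ))
        * ((∑ i ∈ Finset.Icc 1 m, H (i + (n - m) - 1) / (i : ℝ))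
            + (1 / 2) * (H2 n - H2 (n - m))
            - (1 / 2) * ((H n) ^ 2 - (H (n - m)) ^ 2)
            + H (n - m - 1) * (H n - H (n - m) - H m)) :=
  stmt9_general m n hmn
end

section
/- For all positive integers m, a, b, c, d: ∑_{i=1}^m 1/((c+i−1)!·(a+i−1)!·(d+m−i)!·(b+m−i)!) = (1/((d−1)!·(a+m−1)!·(a+b+m−1)!·(c+d+m−1)!))·∑_{i=1}^m (c+d+i−2)!·(a+b+2m−i−1)!/((c+i−1)!·(b+m−i)!) + (1/((c−1)!·(b+m−1)!·(a+b+m−1)!·(c+d+m−1)!))·∑_{i=1}^m (c+d+i−2)!·(a+b+2m−i−1)!/((d+i−1)!·(a+m−i)!). -/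
/-!
Multiplying through by `(a+b+m-1)! (c+d+m-1)!` turns every summand into a product of two
binomial coefficients, so the identity is one between natural numbers. With the shifted variables
`a-1, …, d-1` it is proved by induction on `m`, generalising over `a` and `c`: removing the `i = 0`
term of the left side leaves the same sum for `(a+1, c+1, m)`, the induction hypothesis then
accounts for the first family of terms, and the mismatch in the second family telescopes by
Pascal's rule.
-/

open Finset Nat

theorem Finset.sum_range_add_eq_sum_range_add {M : Type*} [AddCommMonoid M] (F G H : ℕ → M)
    (n : ℕ) (h : ∀ i < n, F i + H i = G i + H (i + 1)) :
    ∑ i ∈ range n, F i + H 0 = ∑ i ∈ range n, G i + H n := by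
  induction n with
  | zero => simp
  | succ n ih =>
    rw [sum_range_succ, sum_range_succ, add_right_comm, ih fun i hi => h i (by omega),
      add_assoc, add_comm (H n), h n n.lt_succ_self, add_assoc]

theorem sum_range_choose_mul_choose (m a b c d : ℕ) :
    ∑ i ∈ range m, (c + d + m + 1).choose (c + i + 1) * (a + b + m + 1).choose (a + i + 1) =
      ∑ i ∈ range m, ((c + d + i + 1).choose d * (a + b + 2 * m - i).choose (a + m) +
        (c + d + i + 1).choose c * (a + b + 2 * m - i).choose (b + m)) := by
  induction m generalizing a c with
  | zero => simp
  | succ m ih =>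
    set H : ℕ → ℕ := fun i =>
      (c + d + i + 1).choose (c + 1) * (a + b + 2 * m + 2 - i).choose (b + m + 1)
    set Q : ℕ → ℕ := fun i =>
      (c + d + i + 1 + 1).choose (c + 1) * (a + b + 2 * m + 1 - i).choose (b + m)
    have tail : ∑ i ∈ range m, (c + d + (m + 1) + 1).choose (c + (i + 1) + 1) *
          (a + b + (m + 1) + 1).choose (a + (i + 1) + 1) =
        ∑ i ∈ range m, (c + d + (i + 1) + 1).choose d *
          (a + b + 2 * (m + 1) - (i + 1)).choose (a + (m + 1)) + ∑ i ∈ range m, Q i := by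
      rw [← sum_add_distrib]
      convert ih (a + 1) (c + 1) using 3 <;> (try simp only [Q]) <;> congr 2 <;> omega
    have telescope : ∑ i ∈ range (m + 1), (c + d + i + 1).choose c *
          (a + b + 2 * (m + 1) - i).choose (b + (m + 1)) + H 0 =
        ∑ i ∈ range (m + 1), Q i + H (m + 1) := by
      refine sum_range_add_eq_sum_range_add _ _ _ _ fun i hi => ?_
      obtain ⟨n, hn⟩ : ∃ n, a + b + 2 * m + 1 - i = n := ⟨_, rfl⟩
      simp only [H, Q, ← add_assoc]
      rw [hn, show a + b + 2 * (m + 1) - i = n + 1 by omega,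
        show a + b + 2 * m + 2 - i = n + 1 by omega, show a + b + 2 * m + 2 - (i + 1) = n by omega,
        choose_succ_succ' n, choose_succ_succ' (c + d + i + 1)]
      ring
    have corner :
        (c + d + 0 + 1).choose d * (a + b + 2 * (m + 1) - 0).choose (a + (m + 1)) = H 0 :=
      congrArg₂ (· * ·) (choose_symm_of_eq_add (by omega)) (choose_symm_of_eq_add (by omega))
    have first : (c + d + (m + 1) + 1).choose (c + 0 + 1) *
        (a + b + (m + 1) + 1).choose (a + 0 + 1) = Q m + H (m + 1) := by
      have pascal : (a + b + (m + 1) + 1).choose (a + 0 + 1) =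
          (a + b + 2 * m + 1 - m).choose (b + m) +
            (a + b + 2 * m + 2 - (m + 1)).choose (b + m + 1) := by
        rw [choose_symm_of_eq_add (show a + b + (m + 1) + 1 = a + 0 + 1 + (b + m + 1) by omega),
          show a + b + 2 * m + 1 - m = a + b + m + 1 by omega,
          show a + b + 2 * m + 2 - (m + 1) = a + b + m + 1 by omega,
          show a + b + (m + 1) + 1 = a + b + m + 1 + 1 by omega, choose_succ_succ']
      rw [pascal]
      simp only [H, Q]
      ring_nf
    rw [sum_range_succ Q m] at telescope
    rw [sum_range_succ', sum_add_distrib, sum_range_succ' _ m, tail, first, corner]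
    omega

theorem sum_Icc_choose_mul_choose {m a b c d : ℕ} (ha : 0 < a) (hb : 0 < b) (hc : 0 < c)
    (hd : 0 < d) :
    ∑ i ∈ Icc 1 m, (c + d + m - 1).choose (c + i - 1) * (a + b + m - 1).choose (a + i - 1) =
      ∑ i ∈ Icc 1 m,
        ((c + d + i - 2).choose (d - 1) * (a + b + 2 * m - i - 1).choose (a + m - 1) +
          (c + d + i - 2).choose (c - 1) * (a + b + 2 * m - i - 1).choose (b + m - 1)) := by
  obtain ⟨a, rfl⟩ : ∃ a', a = a' + 1 := ⟨a - 1, by omega⟩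
  obtain ⟨b, rfl⟩ : ∃ b', b = b' + 1 := ⟨b - 1, by omega⟩
  obtain ⟨c, rfl⟩ : ∃ c', c = c' + 1 := ⟨c - 1, by omega⟩
  obtain ⟨d, rfl⟩ : ∃ d', d = d' + 1 := ⟨d - 1, by omega⟩
  rw [← Ico_add_one_right_eq_Icc, sum_Ico_eq_sum_range, sum_Ico_eq_sum_range,
    Nat.add_sub_cancel]
  convert sum_range_choose_mul_choose m a b c d using 3 <;> congr 2 <;> omega

theorem one_div_factorial_mul_eq {K : Type*} [Field K] [CharZero K] {x y z w n p : ℕ}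
    (hn : x + z = n) (hp : y + w = p) :
    1 / ((x ! : K) * y ! * z ! * w !) = n.choose x * p.choose y / (n ! * p !) := by
  subst hn hp
  rw [cast_add_choose, cast_add_choose]
  have : ((x + z)! : K) ≠ 0 := cast_ne_zero.2 (factorial_ne_zero _)
  have : ((y + w)! : K) ≠ 0 := cast_ne_zero.2 (factorial_ne_zero _)
  field_simp

theorem one_div_mul_factorial_div_eq {K : Type*} [Field K] [CharZero K] {x y z w n p : ℕ}
    (N M : K) (hn : x + z = n) (hp : y + w = p) :
    1 / ((x ! : K) * y ! * N * M) * ((n ! : K) * p ! / (z ! * w !)) =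
      n.choose x * p.choose y / (N * M) := by
  subst hn hp
  rw [cast_add_choose, cast_add_choose]
  field_simp

theorem stmt15_general (m a b c d : ℕ) (ha : 0 < a) (hb : 0 < b)
    (hc : 0 < c) (hd : 0 < d) :
    ∑ i ∈ Finset.Icc 1 m,
        1 / (((Nat.factorial (c + i - 1)) : ℝ) * ((Nat.factorial (a + i - 1)) : ℝ) * ((Nat.factorial (d + m - i)) : ℝ)
              * ((Nat.factorial (b + m - i)) : ℝ))
      = (1 / (((Nat.factorial (d - 1)) : ℝ) * ((Nat.factorial (a + m - 1)) : ℝ) * ((Nat.factorial (a + b + m - 1)) : ℝ)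
              * ((Nat.factorial (c + d + m - 1)) : ℝ)))
        * (∑ i ∈ Finset.Icc 1 m,
            ((Nat.factorial (c + d + i - 2)) : ℝ) * ((Nat.factorial (a + b + 2 * m - i - 1)) : ℝ)
              / (((Nat.factorial (c + i - 1)) : ℝ) * ((Nat.factorial (b + m - i)) : ℝ)))
      + (1 / (((Nat.factorial (c - 1)) : ℝ) * ((Nat.factorial (b + m - 1)) : ℝ) * ((Nat.factorial (a + b + m - 1)) : ℝ)
              * ((Nat.factorial (c + d + m - 1)) : ℝ)))
        * (∑ i ∈ Finset.Icc 1 m,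
            ((Nat.factorial (c + d + i - 2)) : ℝ) * ((Nat.factorial (a + b + 2 * m - i - 1)) : ℝ)
              / (((Nat.factorial (d + i - 1)) : ℝ) * ((Nat.factorial (a + m - i)) : ℝ))) := by
  set D : ℝ := (a + b + m - 1)! * (c + d + m - 1)!
  have binomial := congrArg (fun n : ℕ => (n : ℝ) / D)
    (sum_Icc_choose_mul_choose (m := m) ha hb hc hd)
  simp only [cast_sum, cast_add, cast_mul, sum_div] at binomial
  rw [mul_sum, mul_sum, ← sum_add_distrib]
  calc _ = ∑ i ∈ Icc 1 m,
        ((c + d + m - 1).choose (c + i - 1) * (a + b + m - 1).choose (a + i - 1) : ℝ) / D := by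
        refine sum_congr rfl fun i hi => ?_
        rw [mem_Icc] at hi
        rw [one_div_factorial_mul_eq (n := c + d + m - 1) (p := a + b + m - 1) (by omega)
          (by omega), mul_comm ((c + d + m - 1)! : ℝ)]
    _ = _ := binomial
    _ = _ := by
        refine sum_congr rfl fun i hi => ?_
        rw [mem_Icc] at hi
        rw [add_div, one_div_mul_factorial_div_eq _ _ (by omega) (by omega),
          one_div_mul_factorial_div_eq _ _ (by omega) (by omega)]

theorem stmt15 (m a b c d : ℕ) (hm : 0 < m) (ha : 0 < a) (hb : 0 < b)
    (hc : 0 < c) (hd : 0 < d) :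
    ∑ i ∈ Finset.Icc 1 m,
        1 / (((Nat.factorial (c + i - 1)) : ℝ) * ((Nat.factorial (a + i - 1)) : ℝ) * ((Nat.factorial (d + m - i)) : ℝ)
              * ((Nat.factorial (b + m - i)) : ℝ))
      = (1 / (((Nat.factorial (d - 1)) : ℝ) * ((Nat.factorial (a + m - 1)) : ℝ) * ((Nat.factorial (a + b + m - 1)) : ℝ)
              * ((Nat.factorial (c + d + m - 1)) : ℝ)))
        * (∑ i ∈ Finset.Icc 1 m,
            ((Nat.factorial (c + d + i - 2)) : ℝ) * ((Nat.factorial (a + b + 2 * m - i - 1)) : ℝ)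
              / (((Nat.factorial (c + i - 1)) : ℝ) * ((Nat.factorial (b + m - i)) : ℝ)))
      + (1 / (((Nat.factorial (c - 1)) : ℝ) * ((Nat.factorial (b + m - 1)) : ℝ) * ((Nat.factorial (a + b + m - 1)) : ℝ)
              * ((Nat.factorial (c + d + m - 1)) : ℝ)))
        * (∑ i ∈ Finset.Icc 1 m,
            ((Nat.factorial (c + d + i - 2)) : ℝ) * ((Nat.factorial (a + b + 2 * m - i - 1)) : ℝ)
              / (((Nat.factorial (d + i - 1)) : ℝ) * ((Nat.factorial (a + m - i)) : ℝ))) :=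
  stmt15_general m a b c d ha hb hc hd
end
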